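/- The diameter of the Cayley graph H_n of Sym({0,1}^n) with MC-Toffoli generating set is at least n·2^(n-1). -/

import Mathlib

/-- The action of a multiple-control Toffoli gate with target line `t` and
polarity pattern `p` on the control lines: flip the target bit iff every
other line matches the pattern. -/
def mcToffoliFun (n : ℕ) (t : Fin n) (p : Fin n → Bool) (x : Fin n → Bool) :
    Fin n → Bool :=
  if ∀ j, j ≠ t → x j = p j then Function.update x t (!(x t)) else x

theorem mcToffoliFun_involutive (n : ℕ) (t : Fin n) (p : Fin n → Bool) :
    Function.Involutive (mcToffoliFun n t p) := by
  intro x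
  unfold mcToffoliFun
  by_cases h : ∀ j, j ≠ t → x j = p j
  · have h2 : ∀ j, j ≠ t → Function.update x t (!(x t)) j = p j := by
      intro j hj
      rw [Function.update_of_ne hj]
      exact h j hj
  
    simp [if_pos h, if_pos h2, Function.update_idem]
  · simp [if_neg h]

/-- A multiple-control Toffoli gate as a permutation of `{0,1}ⁿ`. -/
def mcToffoliPerm (n : ℕ) (t : Fin n) (p : Fin n → Bool) :
    Equiv.Perm (Fin n → Bool) :=
  (mcToffoliFun_involutive n t p).toPerm

/-- The set of all multiple-control Toffoli gates on `n` lines. -/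
def mcToffoliSet (n : ℕ) : Set (Equiv.Perm (Fin n → Bool)) :=
  {σ | ∃ t p, σ = mcToffoliPerm n t p}
/-- The (undirected) Cayley graph of a group `G` with connecting set `C`:
two distinct elements are adjacent iff one is obtained from the other by left
multiplication by a generator. -/
def cayleyGraph {G : Type*} [Group G] (C : Set G) : SimpleGraph G where
  Adj g h := g ≠ h ∧ ∃ c ∈ C, h = c * g ∨ g = c * h
  symm := by
    constructor
    rintro g h ⟨hne, c, hc, hch⟩
    exact ⟨hne.symm, c, hc, hch.symm⟩
  loopless := by
    constructor
    rintro g ⟨hne, -⟩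
    exact hne rfl

/-!
The total Hamming displacement `∑ₓ d(σ x, x)` of a permutation of `{0,1}ⁿ` is subadditive and
invariant under inversion, and an MC-Toffoli gate swaps two strings at Hamming distance one, so
one edge of the Cayley graph changes it by at most `2`. The bitwise complement has displacement
`n * 2ⁿ`, hence lies at distance at least `n * 2ⁿ⁻¹` from the identity. This distance is bounded
by `diam` (which is `0` for a disconnected graph) because the gates are transpositions acting
transitively, so they generate the whole symmetric group.
-/

open Equiv Finset MulAction Subgroup

section Displacement

variable {ι β : Type*} [Fintype ι] [DecidableEq ι] [DecidableEq β]

lemma hammingDist_update_le_one (x : ι → β) (t : ι) (b : β) :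
    hammingDist x (Function.update x t b) ≤ 1 := by
  refine (card_le_card fun i hi => mem_singleton.2 ?_).trans (card_singleton t).le
  by_contra hit
  simp [Function.update_of_ne hit] at hi

variable [Fintype β]

def hammingDisplacement (σ : Perm (ι → β)) : ℕ :=
  ∑ x, hammingDist (σ x) x

@[simp]
lemma hammingDisplacement_one : hammingDisplacement (1 : Perm (ι → β)) = 0 := by
  simp [hammingDisplacement]

lemma hammingDisplacement_mul_le (σ τ : Perm (ι → β)) :
    hammingDisplacement (σ * τ) ≤ hammingDisplacement σ + hammingDisplacement τ := by
  calc hammingDisplacement (σ * τ)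
      ≤ ∑ x, (hammingDist (σ (τ x)) (τ x) + hammingDist (τ x) x) :=
        sum_le_sum fun x _ => hammingDist_triangle _ _ _
    _ = hammingDisplacement σ + hammingDisplacement τ := by
        rw [sum_add_distrib, Equiv.sum_comp τ fun y => hammingDist (σ y) y]; rfl

lemma hammingDisplacement_inv (σ : Perm (ι → β)) :
    hammingDisplacement σ⁻¹ = hammingDisplacement σ := by
  unfold hammingDisplacement
  rw [← Equiv.sum_comp σ]
  simp [hammingDist_comm]

lemma hammingDisplacement_swap (a b : ι → β) :
    hammingDisplacement (swap a b) = 2 * hammingDist a b := by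
  rcases eq_or_ne a b with rfl | hab
  · rw [swap_self, hammingDist_self]
    exact hammingDisplacement_one
  · rw [hammingDisplacement, Fintype.sum_eq_add a b hab fun x hx => by
      rw [swap_apply_of_ne_of_ne hx.1 hx.2, hammingDist_self]]
    simp [hammingDist_comm b a, two_mul]

lemma hammingDisplacement_piCongrRight (π : ι → Perm β) (hπ : ∀ i b, π i b ≠ b) :
    hammingDisplacement (piCongrRight π : Perm (ι → β)) =
      Fintype.card ι * Fintype.card (ι → β) := by
  have hdist (x : ι → β) : hammingDist (piCongrRight π x) x = Fintype.card ι := by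
    simp [hammingDist, hπ]
  simp [hammingDisplacement, hdist, mul_comm]

lemma hammingDisplacement_le_of_cayleyGraph_adj {C : Set (Perm (ι → β))} {k : ℕ}
    (hC : ∀ c ∈ C, hammingDisplacement c ≤ k) {a b : Perm (ι → β)}
    (h : (cayleyGraph C).Adj a b) : hammingDisplacement a ≤ hammingDisplacement b + k := by
  obtain ⟨-, c, hc, rfl | rfl⟩ := h
  · have := hammingDisplacement_mul_le c⁻¹ (c * a)
    rw [inv_mul_cancel_left, hammingDisplacement_inv] at this
    linarith [hC c hc]
  · linarith [hammingDisplacement_mul_le c b, hC c hc]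

end Displacement

namespace SimpleGraph

variable {V : Type*} {G : SimpleGraph V} {f : V → ℕ} {k : ℕ}

lemma Walk.le_add_mul_length (hf : ∀ a b, G.Adj a b → f a ≤ f b + k) {u v : V}
    (w : G.Walk u v) : f u ≤ f v + k * w.length := by
  induction w with
  | nil => simp
  | cons h _ ih =>
    rw [Walk.length_cons]
    linarith [hf _ _ h]

lemma Reachable.le_add_mul_dist (hf : ∀ a b, G.Adj a b → f a ≤ f b + k) {u v : V}
    (h : G.Reachable u v) : f u ≤ f v + k * G.dist u v := by
  obtain ⟨w, hw⟩ := h.exists_walk_length_eq_dist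
  exact hw ▸ w.le_add_mul_length hf

end SimpleGraph

section CayleyGraph

variable {G : Type*} [Group G] {C : Set G}

lemma cayleyGraph_reachable_mul_left {c : G} (hc : c ∈ C) (g : G) :
    (cayleyGraph C).Reachable g (c * g) := by
  by_cases h : g = c * g
  · exact h ▸ .refl g
  · exact SimpleGraph.Adj.reachable ⟨h, c, hc, .inl rfl⟩

lemma cayleyGraph_reachable_one {g : G} (hg : g ∈ closure C) :
    (cayleyGraph C).Reachable 1 g := by
  induction hg using closure_induction_left with
  | one => rfl
  | mul_left c hc g _ ih => exact ih.trans (cayleyGraph_reachable_mul_left hc g)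
  | inv_mul_cancel c hc g _ ih =>
    refine ih.trans (SimpleGraph.Reachable.symm ?_)
    simpa using cayleyGraph_reachable_mul_left hc (c⁻¹ * g)

lemma cayleyGraph_connected (hC : closure C = ⊤) : (cayleyGraph C).Connected :=
  .mk fun g h => (cayleyGraph_reachable_one (hC ▸ mem_top g)).symm.trans
    (cayleyGraph_reachable_one (hC ▸ mem_top h))

end CayleyGraph

lemma orbit_eq_univ_of_update_mem_orbit {ι β H : Type*} [Fintype ι] [DecidableEq ι] [Group H]
    [MulAction H (ι → β)] (h : ∀ (z : ι → β) i b, Function.update z i b ∈ orbit H z)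
    (x : ι → β) : orbit H x = Set.univ := by
  refine Set.eq_univ_of_forall fun y => ?_
  have key (s : Finset ι) : s.piecewise y x ∈ orbit H x := by
    induction s using Finset.induction_on with
    | empty => simp
    | insert i s _ ih =>
      rw [piecewise_insert, ← orbit_eq_iff.2 ih]
      exact orbit_eq_iff.2 (h _ i _) ▸ mem_orbit_self _
  simpa using key univ

lemma mcToffoliPerm_eq_swap (n : ℕ) (t : Fin n) (p : Fin n → Bool) :
    mcToffoliPerm n t p = swap p (Function.update p t (!p t)) := by
  ext x : 1
  simp only [mcToffoliPerm, Function.Involutive.coe_toPerm, mcToffoliFun]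
  split_ifs with h
  · have hx : x = Function.update p t (x t) := Function.eq_update_iff.2 ⟨rfl, h⟩
    rcases (x t).eq_or_eq_not (p t) with ht | ht <;> rw [ht] at hx <;> subst hx <;> simp
  · have hp : x ≠ p := fun hxp => h fun j _ => hxp ▸ rfl
    have hq : x ≠ Function.update p t (!p t) := fun hxq =>
      h fun j hj => by rw [hxq, Function.update_of_ne hj]
    rw [swap_apply_of_ne_of_ne hp hq]

lemma closure_mcToffoliSet (n : ℕ) : closure (mcToffoliSet n) = ⊤ := by
  have hswap : ∀ σ ∈ mcToffoliSet n, σ.IsSwap := by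
    rintro _ ⟨t, p, rfl⟩
    refine ⟨p, _, fun h => ?_, mcToffoliPerm_eq_swap n t p⟩
    simpa using congr_fun h t
  have hflip (z : Fin n → Bool) (t : Fin n) (b : Bool) :
      Function.update z t b ∈ orbit (closure (mcToffoliSet n)) z := by
    rcases b.eq_or_eq_not (z t) with rfl | rfl
    · simp
    · exact ⟨⟨_, subset_closure ⟨t, z, rfl⟩⟩, by simp [mcToffoliPerm_eq_swap]⟩
  have : IsPretransitive (closure (mcToffoliSet n)) (Fin n → Bool) :=
    (isPretransitive_iff_orbit_eq_univ 0).2 (orbit_eq_univ_of_update_mem_orbit hflip 0)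
  exact closure_of_isSwap_of_isPretransitive hswap

lemma hammingDisplacement_le_two_of_mem_mcToffoliSet {n : ℕ} {σ : Perm (Fin n → Bool)}
    (hσ : σ ∈ mcToffoliSet n) : hammingDisplacement σ ≤ 2 := by
  obtain ⟨t, p, rfl⟩ := hσ
  rw [mcToffoliPerm_eq_swap, hammingDisplacement_swap]
  linarith [hammingDist_update_le_one p t (!p t)]

/-- The diameter of the Cayley graph `H_n` is at least `n * 2 ^ (n - 1)`. -/
theorem cayleyH_diam_lower_bound (n : ℕ) :
    n * 2 ^ (n - 1) ≤ (cayleyGraph (mcToffoliSet n)).diam := by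
  set H := cayleyGraph (mcToffoliSet n)
  set compl : Perm (Fin n → Bool) := piCongrRight fun _ => boolNot
  have hconn : H.Connected := cayleyGraph_connected (closure_mcToffoliSet n)
  have hcompl : hammingDisplacement compl = n * 2 ^ n := by
    simpa using hammingDisplacement_piCongrRight (fun _ : Fin n => boolNot)
      fun _ => Bool.not_ne_self
  have hdist : hammingDisplacement compl ≤ hammingDisplacement 1 + 2 * H.dist compl 1 :=
    (hconn.preconnected compl 1).le_add_mul_dist fun _ _ =>
      hammingDisplacement_le_of_cayleyGraph_adj fun _ =>
        hammingDisplacement_le_two_of_mem_mcToffoliSet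
  have hdiam : H.dist compl 1 ≤ H.diam :=
    SimpleGraph.dist_le_diam (H.connected_iff_ediam_ne_top.1 hconn)
  rw [hcompl, hammingDisplacement_one] at hdist
  rcases n with _ | m
  · simp
  · rw [pow_succ] at hdist
    simp only [Nat.add_sub_cancel]
    nlinarith
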